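/- The function f(x) = ( (2/3)·(log(1/(2x)))^{3/2} ) / ( log(1/x)·√(log(1 + 1/x)) ) satisfies f(x) ≤ 2/3 for all x ∈ (0, 1/2), and f is decreasing on the interval (0, 1/2) (i.e. if 0 < x₁ ≤ x₂ < 1/2 then f(x₂) ≤ f(x₁)). Moreover f(x) → 2/3 as x → 0⁺. -/

import Mathlib

/-!
Write `L = log (1/x)`. Then `log (1/(2x)) = L - log 2` and `log (1 + 1/x) = L + log (1 + x)`, so
`f x = (2/3) · (1 - log 2 / L) · √(1 - (log 2 + log (1 + x)) / log (1 + 1/x))`.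
As `x` increases, `L` and `log (1 + 1/x)` decrease while `log (1 + x)` increases, so both factors
decrease; as `x → 0⁺` both denominators tend to `∞`, so both factors tend to `1`. The bound
`f ≤ 2/3` then follows from monotonicity and the limit.
-/

open Real Filter Topology Set

noncomputable def logPowerRatio (x : ℝ) : ℝ :=
  (2/3) * log (1/(2*x)) ^ ((3:ℝ)/2) / (log (1/x) * √(log (1 + 1/x)))

lemma log_one_div_two_mul {x : ℝ} (hx : 0 < x) : log (1/(2*x)) = log (1/x) - log 2 := by
  rw [one_div, one_div, log_inv, log_inv, log_mul two_ne_zero hx.ne']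
  ring

lemma log_one_add_one_div {x : ℝ} (hx : 0 < x) : log (1 + 1/x) = log (1/x) + log (1 + x) := by
  rw [show 1 + 1/x = (1 + x) / x by field_simp; ring, log_div (by positivity) hx.ne',
    one_div, log_inv]
  ring

lemma log_two_lt_log_one_div {x : ℝ} (hx : x ∈ Ioo (0:ℝ) (1/2)) : log 2 < log (1/x) :=
  log_lt_log two_pos (by rw [lt_div_iff₀ hx.1]; linarith [hx.2])

lemma logPowerRatio_eq {x : ℝ} (hx : x ∈ Ioo (0:ℝ) (1/2)) :
    logPowerRatio x = (2/3) * (1 - log 2 / log (1/x)) *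
      √(1 - (log 2 + log (1 + x)) / log (1 + 1/x)) := by
  have hlog : log 2 < log (1/x) := log_two_lt_log_one_div hx
  have hL : 0 < log (1/x) := (log_pos one_lt_two).trans hlog
  have ha : 0 ≤ log (1/(2*x)) := by rw [log_one_div_two_mul hx.1]; linarith
  have hm : 0 < log (1 + 1/x) := log_pos (by linarith [one_div_pos.mpr hx.1])
  have h₁ : 1 - log 2 / log (1/x) = log (1/(2*x)) / log (1/x) := by
    rw [log_one_div_two_mul hx.1, sub_div, div_self hL.ne']
  have h₂ : 1 - (log 2 + log (1 + x)) / log (1 + 1/x) = log (1/(2*x)) / log (1 + 1/x) := by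
    rw [show log (1/(2*x)) = log (1 + 1/x) - (log 2 + log (1 + x)) by
      rw [log_one_div_two_mul hx.1, log_one_add_one_div hx.1]; ring, sub_div, div_self hm.ne']
  rw [logPowerRatio, h₁, h₂, show ((3:ℝ)/2) = 1 + 1/2 by norm_num, rpow_add' ha (by norm_num),
    rpow_one, ← sqrt_eq_rpow, sqrt_div ha]
  field_simp

lemma logPowerRatio_antitoneOn : AntitoneOn logPowerRatio (Ioo 0 (1/2)) := by
  intro x₁ hx₁ x₂ hx₂ h
  have hL₂ : 0 < log (1/x₂) := (log_pos one_lt_two).trans (log_two_lt_log_one_div hx₂)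
  have hL : log (1/x₂) ≤ log (1/x₁) :=
    log_le_log (one_div_pos.mpr hx₂.1) (by gcongr; exact hx₁.1)
  have hm₂ : 0 < log (1 + 1/x₂) := log_pos (by linarith [one_div_pos.mpr hx₂.1])
  have hm : log (1 + 1/x₂) ≤ log (1 + 1/x₁) :=
    log_le_log (by linarith [one_div_pos.mpr hx₂.1]) (by gcongr; exact hx₁.1)
  have hd₁ : 0 ≤ log 2 + log (1 + x₁) :=
    add_nonneg (log_nonneg one_le_two) (log_nonneg (by linarith [hx₁.1]))
  have hd : log (1 + x₁) ≤ log (1 + x₂) := log_le_log (by linarith [hx₁.1]) (by linarith)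
  have hp₁ : 0 ≤ 1 - log 2 / log (1/x₁) :=
    sub_nonneg.mpr ((div_le_one (hL₂.trans_le hL)).mpr (log_two_lt_log_one_div hx₁).le)
  rw [logPowerRatio_eq hx₁, logPowerRatio_eq hx₂]
  have hp : 1 - log 2 / log (1/x₂) ≤ 1 - log 2 / log (1/x₁) :=
    sub_le_sub_left (div_le_div₀ (log_nonneg one_le_two) le_rfl hL₂ hL) 1
  have hq : 1 - (log 2 + log (1 + x₂)) / log (1 + 1/x₂) ≤
      1 - (log 2 + log (1 + x₁)) / log (1 + 1/x₁) :=
    sub_le_sub_left (div_le_div₀ (by linarith) (by linarith) hm₂ hm) 1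
  exact mul_le_mul (by linarith) (sqrt_le_sqrt hq) (sqrt_nonneg _) (by positivity)

lemma tendsto_log_one_div_nhdsGT_zero : Tendsto (fun x : ℝ ↦ log (1/x)) (𝓝[>] 0) atTop := by
  simpa only [one_div, Function.comp_def] using tendsto_log_atTop.comp tendsto_inv_nhdsGT_zero

lemma tendsto_log_one_add_one_div_nhdsGT_zero :
    Tendsto (fun x : ℝ ↦ log (1 + 1/x)) (𝓝[>] 0) atTop := by
  simpa only [one_div, Function.comp_def] using
    tendsto_log_atTop.comp (tendsto_atTop_add_const_left _ 1 tendsto_inv_nhdsGT_zero)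

lemma tendsto_logPowerRatio : Tendsto logPowerRatio (𝓝[>] 0) (𝓝 (2/3)) := by
  have hd : Tendsto (fun x : ℝ ↦ log 2 + log (1 + x)) (𝓝[>] 0) (𝓝 (log 2)) := by
    have : ContinuousAt (fun x : ℝ ↦ log 2 + log (1 + x)) 0 := by fun_prop (disch := norm_num)
    simpa using this.tendsto.mono_left nhdsWithin_le_nhds
  have hp := (tendsto_const_nhds (x := log 2)).div_atTop tendsto_log_one_div_nhdsGT_zero
  have hq := hd.div_atTop tendsto_log_one_add_one_div_nhdsGT_zero
  have hlim := ((hp.const_sub 1).const_mul (2/3)).mul (hq.const_sub 1).sqrt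
  rw [sub_zero, sqrt_one, mul_one, mul_one] at hlim
  refine hlim.congr' ?_
  filter_upwards [Ioo_mem_nhdsGT (show (0:ℝ) < 1/2 by norm_num)] with x hx
  exact (logPowerRatio_eq hx).symm

open Real in
theorem stmt_9 :
    (∀ x ∈ Set.Ioo (0:ℝ) (1/2),
      (2/3) * Real.log (1/(2*x)) ^ ((3:ℝ)/2) /
        (Real.log (1/x) * Real.sqrt (Real.log (1 + 1/x))) ≤ 2/3) ∧
    (∀ x₁ x₂ : ℝ, 0 < x₁ → x₁ ≤ x₂ → x₂ < 1/2 →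
      (2/3) * Real.log (1/(2*x₂)) ^ ((3:ℝ)/2) /
        (Real.log (1/x₂) * Real.sqrt (Real.log (1 + 1/x₂))) ≤
      (2/3) * Real.log (1/(2*x₁)) ^ ((3:ℝ)/2) /
        (Real.log (1/x₁) * Real.sqrt (Real.log (1 + 1/x₁)))) ∧
    Filter.Tendsto
      (fun x : ℝ => (2/3) * Real.log (1/(2*x)) ^ ((3:ℝ)/2) /
        (Real.log (1/x) * Real.sqrt (Real.log (1 + 1/x))))
      (nhdsWithin 0 (Set.Ioi 0)) (nhds (2/3)) := by
  have hanti (x₁ x₂ : ℝ) (h₁ : 0 < x₁) (h : x₁ ≤ x₂) (h₂ : x₂ < 1/2) :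
      logPowerRatio x₂ ≤ logPowerRatio x₁ :=
    logPowerRatio_antitoneOn ⟨h₁, h.trans_lt h₂⟩ ⟨h₁.trans_le h, h₂⟩ h
  refine ⟨fun x hx ↦ ?_, hanti, tendsto_logPowerRatio⟩
  refine ge_of_tendsto tendsto_logPowerRatio ?_
  filter_upwards [Ioo_mem_nhdsGT hx.1] with y hy
  exact hanti y x hy.1 hy.2.le hx.2
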